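/- For every positive integer m and all positive integers l_0, l_1, …, l_{m−1}, there exists a finite comet quiver E with cycle c of length m and a vertex v on c such that for each i ∈ {0,1,…,m−1}, the number of paths of E that end at v, do not contain the cycle c, and have length congruent to i modulo m equals l_i. -/

import Mathlib

/-- A quiver (directed graph): vertices, edges, source and range maps. -/
structure Quiv where
  V : Type
  E : Type
  src : E → V
  rng : E → V

namespace Quiv

/-- `es` is a path from `u` to `v` (the empty list is the trivial path at `v`,
in which case `u = v`; a nonempty list is a path `e₁…eₙ` with
`rng eₜ = src eₜ₊₁`, starting at `src e₁ = u` and ending at `rng eₙ = v`). -/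
def IsPathFromTo (G : Quiv) (u : G.V) (es : List G.E) (v : G.V) : Prop :=
  es.Chain' (fun e f => G.rng e = G.src f) ∧
  (es = [] → u = v) ∧
  (∀ e, es.head? = some e → G.src e = u) ∧
  (∀ e, es.getLast? = some e → G.rng e = v)

/-- `es` is a path ending at `v`. -/
def IsPathTo (G : Quiv) (es : List G.E) (v : G.V) : Prop :=
  ∃ u, G.IsPathFromTo u es v

/-- A sink is a vertex emitting no edges. -/
def IsSink (G : Quiv) (v : G.V) : Prop := ∀ e : G.E, G.src e ≠ v

/-- A cycle: a path of positive length ending at its own source, in which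
distinct edges have distinct sources. -/
def IsCycle (G : Quiv) (es : List G.E) : Prop :=
  es ≠ [] ∧ (∃ u, G.IsPathFromTo u es u) ∧
  ∀ e ∈ es, ∀ f ∈ es, e ≠ f → G.src e ≠ G.src f

end Quiv

/-- A path `es` contains the cycle `c` if some rotation of `c` occurs as a
contiguous subpath (infix) of `es`. -/
def Quiv.Contains (G : Quiv) (c es : List G.E) : Prop :=
  ∃ k : ℕ, (c.rotate k) <:+: es

/-!
Take the functional graph of a map `step` on `ZMod m ⊕ (extra sources)`: on the cycle
`j ↦ j - 1`, and for every residue `i` there are `l i - 1` extra sources with an edge into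
`i - 1`. Paths are orbit segments `u, step u, …`, and such a segment contains the cycle exactly
when it runs for `m` steps after reaching it. Hence from each vertex `u` exactly one path to the
base vertex `0` avoids the cycle; its length is `j` for the cycle vertex `j` and
`(i - 1).val + 1 ≡ i` for an extra source of residue `i`. So the residue `i` is realized by the
cycle vertex `i` and by the `l i - 1` extra sources of residue `i`.
-/

namespace Quiv

theorem isPathFromTo_nil (G : Quiv) {u v : G.V} : G.IsPathFromTo u [] v ↔ u = v :=
  ⟨fun h => h.2.1 rfl, fun h => ⟨List.isChain_nil, fun _ => h, by simp, by simp⟩⟩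

theorem isPathFromTo_cons (G : Quiv) {u v : G.V} {e : G.E} {es : List G.E} :
    G.IsPathFromTo u (e :: es) v ↔ G.src e = u ∧ G.IsPathFromTo (G.rng e) es v := by
  constructor
  · rintro ⟨hchain, -, hsrc, hrng⟩
    obtain ⟨hnext, htail⟩ := List.isChain_cons.mp hchain
    refine ⟨hsrc e rfl, htail, ?_, fun f hf => (hnext f hf).symm, fun f hf => hrng f ?_⟩
    · rintro rfl
      exact hrng e rfl
    · cases es <;> simp_all
  · rintro ⟨rfl, htail, hnil, hsrc, hrng⟩
    refine ⟨List.isChain_cons.mpr ⟨fun f hf => (hsrc f hf).symm, htail⟩, nofun,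
      fun f hf => by simp_all, fun f hf => ?_⟩
    cases es with
    | nil => simp_all
    | cons => exact hrng f (by simpa using hf)

-- Each edge is identified with its source `u`; it goes to `f u`.
abbrev ofFun {α : Type} (f : α → α) : Quiv := ⟨α, α, id, f⟩

theorem ofFun_isPathFromTo_iff {α : Type} (f : α → α) {u v : α} {es : List α} :
    (ofFun f).IsPathFromTo u es v ↔ es = List.iterate f u es.length ∧ f^[es.length] u = v := by
  induction es generalizing u with
  | nil => rw [isPathFromTo_nil]; simp
  | cons e es ih =>
    rw [isPathFromTo_cons, ih]
    simp only [id, List.length_cons, List.iterate, Function.iterate_succ_apply, List.cons.injEq]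
    constructor
    · rintro ⟨rfl, h⟩; exact ⟨⟨rfl, h.1⟩, h.2⟩
    · rintro ⟨⟨rfl, h⟩, h'⟩; exact ⟨rfl, h, h'⟩

end Quiv

theorem List.rotate_iterate_of_isPeriodicPt {α : Type*} {f : α → α} {a : α} {m : ℕ}
    (h : Function.IsPeriodicPt f m a) (k : ℕ) :
    (List.iterate f a m).rotate k = List.iterate f (f^[k] a) m := by
  refine List.ext_getElem (by simp) fun t h₁ _ => ?_
  rw [List.getElem_rotate, List.getElem_iterate, List.getElem_iterate, List.length_iterate,
    h.iterate_mod_apply, ← Function.iterate_add_apply, add_comm]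

namespace Comet

variable (m : ℕ) (l : ℕ → ℕ)

abbrev Vertex := ZMod m ⊕ Σ i : ZMod m, Fin (l i.val - 1)

def step : Vertex m l → Vertex m l
  | .inl j => .inl (j - 1)
  | .inr ⟨i, _⟩ => .inl (i - 1)

abbrev quiver : Quiv := Quiv.ofFun (step m l)

def cycle : List (Vertex m l) := List.iterate (step m l) (.inl 0) m

def distCycle : Vertex m l → ℕ
  | .inl _ => 0
  | .inr _ => 1

-- The length of the unique path from `u` to the base vertex `.inl 0` not containing `cycle`.
def distBase : Vertex m l → ℕ
  | .inl j => j.val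
  | .inr ⟨i, _⟩ => (i - 1).val + 1

variable {m l}

theorem iterate_step_inl (j : ZMod m) (n : ℕ) :
    (step m l)^[n] (.inl j) = .inl (j - n) := by
  induction n generalizing j with
  | zero => simp
  | succ n ih =>
    rw [Function.iterate_succ_apply, step, ih]
    push_cast
    ring_nf

theorem exists_iterate_distCycle_eq_inl (u : Vertex m l) :
    ∃ j, (step m l)^[distCycle m l u] u = .inl j := by
  cases u <;> exact ⟨_, rfl⟩

theorem isPeriodicPt_step_inl (j : ZMod m) : Function.IsPeriodicPt (step m l) m (.inl j) := by
  rw [Function.IsPeriodicPt, Function.IsFixedPt, iterate_step_inl, ZMod.natCast_self, sub_zero]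

variable [NeZero m]

theorem exists_rotate_cycle_eq (j : ZMod m) :
    ∃ k, (cycle m l).rotate k = List.iterate (step m l) (.inl j) m := by
  refine ⟨(-j).val, ?_⟩
  rw [cycle, List.rotate_iterate_of_isPeriodicPt (isPeriodicPt_step_inl 0), iterate_step_inl,
    ZMod.natCast_val, ZMod.cast_id, zero_sub, neg_neg]

theorem mem_iterate_step_inl {j : ZMod m} {n : ℕ} (hn : m ≤ n) {e : Vertex m l} :
    e ∈ List.iterate (step m l) (.inl j) n ↔ ∃ a, e = .inl a := by
  rw [List.mem_iterate]
  constructor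
  · rintro ⟨t, -, rfl⟩
    exact ⟨_, iterate_step_inl j t⟩
  · rintro ⟨a, rfl⟩
    refine ⟨(j - a).val, (ZMod.val_lt _).trans_le hn, ?_⟩
    rw [iterate_step_inl, ZMod.natCast_zmod_val, sub_sub_cancel]

theorem mem_iff_of_isCycle {c : List (Vertex m l)} (hc : (quiver m l).IsCycle c)
    (e : Vertex m l) : e ∈ c ↔ ∃ a, e = .inl a := by
  obtain ⟨hne, ⟨u, hu⟩, -⟩ := hc
  rw [Quiv.ofFun_isPathFromTo_iff] at hu
  obtain ⟨hc, hper⟩ := hu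
  have hpos : 0 < c.length := List.length_pos_iff.mpr hne
  cases u with
  | inr x =>
    obtain ⟨n, hn⟩ := Nat.exists_eq_add_one_of_ne_zero hpos.ne'
    rw [hn, Function.iterate_succ_apply] at hper
    exact absurd hper (by simp [step, iterate_step_inl])
  | inl j =>
    rw [iterate_step_inl, Sum.inl.injEq, sub_eq_self, ZMod.natCast_eq_zero_iff] at hper
    rw [hc]
    exact mem_iterate_step_inl (Nat.le_of_dvd hpos hper)

theorem isCycle_cycle : (quiver m l).IsCycle (cycle m l) := by
  refine ⟨?_, ⟨.inl 0, ?_⟩, fun e _ f _ hef => hef⟩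
  · simp [cycle, NeZero.ne m]
  · rw [Quiv.ofFun_isPathFromTo_iff, cycle, List.length_iterate]
    exact ⟨rfl, isPeriodicPt_step_inl 0⟩

theorem contains_iterate_iff (u : Vertex m l) (n : ℕ) :
    (quiver m l).Contains (cycle m l) (List.iterate (step m l) u n) ↔
      distCycle m l u + m ≤ n := by
  constructor
  · rintro ⟨k, hk⟩
    have hle : m ≤ n := by simpa [cycle] using hk.length_le
    cases u with
    | inl j => simpa [distCycle] using hle
    | inr x =>
      by_contra! hlt
      have hnm : n = m := by simp only [distCycle] at hlt; omega
      have heq : (cycle m l).rotate k = List.iterate (step m l) (.inr x) n :=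
        hk.sublist.eq_of_length (by simp [cycle, hnm])
      have hx : (.inr x : Vertex m l) ∈ List.iterate (step m l) (.inr x) n :=
        List.mem_iterate.mpr ⟨0, hnm ▸ NeZero.pos m, rfl⟩
      rw [← heq, List.mem_rotate, mem_iff_of_isCycle isCycle_cycle] at hx
      simp at hx
  · intro hn
    obtain ⟨j, hj⟩ := exists_iterate_distCycle_eq_inl u
    obtain ⟨k, hk⟩ := exists_rotate_cycle_eq (l := l) j
    obtain ⟨r, rfl⟩ := Nat.exists_eq_add_of_le hn
    refine ⟨k, ?_⟩
    rw [List.iterate_add, List.iterate_add, hj, hk]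
    exact List.infix_append _ _ _

theorem iterate_step_inl_eq_base_iff (j : ZMod m) (n : ℕ) :
    (step m l)^[n] (.inl j) = .inl 0 ∧ n < m ↔ n = j.val := by
  rw [iterate_step_inl, Sum.inl.injEq, sub_eq_zero]
  constructor
  · rintro ⟨rfl, hn⟩
    exact (ZMod.val_cast_of_lt hn).symm
  · rintro rfl
    exact ⟨(ZMod.natCast_zmod_val j).symm, ZMod.val_lt j⟩

theorem iterate_step_eq_base_iff (u : Vertex m l) (n : ℕ) :
    (step m l)^[n] u = .inl 0 ∧ n < distCycle m l u + m ↔ n = distBase m l u := by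
  cases u with
  | inl j => simpa [distCycle, distBase] using iterate_step_inl_eq_base_iff j n
  | inr x =>
    cases n with
    | zero => simp [distBase]
    | succ n =>
      rw [Function.iterate_succ_apply]
      simpa [distCycle, distBase, step, add_comm 1 m] using iterate_step_inl_eq_base_iff (x.1 - 1) n

theorem setOf_isPathTo_base_eq_image (i : ℕ) :
    {es | (quiver m l).IsPathTo es (.inl 0) ∧ ¬ (quiver m l).Contains (cycle m l) es ∧
      es.length % m = i} =
      (fun u => List.iterate (step m l) u (distBase m l u)) '' {u | distBase m l u % m = i} := by
  ext es
  simp only [Set.mem_ofPred_eq, Set.mem_image, Quiv.IsPathTo, Quiv.ofFun_isPathFromTo_iff]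
  constructor
  · rintro ⟨⟨u, hes, hend⟩, hnc, hmod⟩
    rw [hes, contains_iterate_iff, not_le] at hnc
    have hlen := (iterate_step_eq_base_iff u _).mp ⟨hend, hnc⟩
    exact ⟨u, hlen ▸ hmod, by rw [← hlen, ← hes]⟩
  · rintro ⟨u, hmod, rfl⟩
    obtain ⟨hend, hlt⟩ := (iterate_step_eq_base_iff u _).mpr rfl
    refine ⟨⟨u, by simp, by simpa using hend⟩, ?_, by simpa using hmod⟩
    rw [contains_iterate_iff]
    exact not_le.mpr hlt

theorem injective_iterate_distBase :
    Function.Injective fun u : Vertex m l => List.iterate (step m l) u (distBase m l u) := by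
  intro u u' h
  have hlen : distBase m l u = distBase m l u' := by simpa using congrArg List.length h
  by_cases hzero : distBase m l u = 0
  · have hu := ((iterate_step_eq_base_iff u 0).mpr hzero.symm).1
    have hu' := ((iterate_step_eq_base_iff u' 0).mpr (hlen ▸ hzero).symm).1
    exact hu.trans hu'.symm
  · obtain ⟨n, hn⟩ := Nat.exists_eq_succ_of_ne_zero hzero
    have hhead := congrArg List.head? h
    simpa only [← hlen, hn, List.iterate, List.head?_cons, Option.some.injEq] using hhead

theorem ncard_setOf_distBase_mod_eq (i : ZMod m) (hi : 0 < l i.val) :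
    {u : Vertex m l | distBase m l u % m = i.val}.ncard = l i.val := by
  have hset : {u : Vertex m l | distBase m l u % m = i.val} =
      {.inl i} ∪ Set.range fun t => .inr ⟨i, t⟩ := by
    ext (j | ⟨k, t⟩)
    · simp [distBase, Nat.mod_eq_of_lt (ZMod.val_lt j), ZMod.val_injective m |>.eq_iff]
    · have : ((k - 1).val + 1) % m = k.val := by
        rw [← ZMod.val_natCast, Nat.cast_add, ZMod.natCast_zmod_val, Nat.cast_one, sub_add_cancel]
      simp only [Set.mem_ofPred_eq, distBase, this, (ZMod.val_injective m).eq_iff,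
        Set.mem_union, Set.mem_singleton_iff, reduceCtorEq, false_or, Set.mem_range]
      constructor
      · rintro rfl
        exact ⟨t, rfl⟩
      · rintro ⟨t', h⟩
        cases h
        rfl
  rw [hset, Set.ncard_union_eq (by simp), Set.ncard_singleton,
    Set.ncard_range_of_injective (fun t t' h => by simpa using h), Nat.card_eq_fintype_card,
    Fintype.card_fin]
  omega

theorem step_mem_cycle (u : Vertex m l) : step m l u ∈ cycle m l :=
  (mem_iff_of_isCycle isCycle_cycle _).mpr (by cases u <;> exact ⟨_, rfl⟩)

theorem ncard_setOf_isPathTo_base {i : ℕ} (hi : i < m) (hli : 0 < l i) :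
    {es | (quiver m l).IsPathTo es (.inl 0) ∧ ¬ (quiver m l).Contains (cycle m l) es ∧
      es.length % m = i}.ncard = l i := by
  have hival : (i : ZMod m).val = i := ZMod.val_cast_of_lt hi
  rw [setOf_isPathTo_base_eq_image, Set.ncard_image_of_injective _ injective_iterate_distBase,
    ← hival, ncard_setOf_distBase_mod_eq _ (by rwa [hival])]

end Comet

/-- For every `m > 0` and positive `l 0, …, l (m-1)` there is a finite comet
quiver with cycle `c` of length `m` and a vertex `v` on `c` such that, for each
`i < m`, exactly `l i` paths end at `v`, do not contain `c`, and have length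
congruent to `i` modulo `m`. -/
theorem stmt12 (m : ℕ) (hm : 0 < m) (l : ℕ → ℕ) (hl : ∀ i, i < m → 0 < l i) :
    ∃ (G : Quiv) (c : List G.E) (v : G.V), Finite G.V ∧ Finite G.E ∧
      G.IsCycle c ∧ c.length = m ∧
      (∀ c' : List G.E, G.IsCycle c' → ∀ e, e ∈ c' ↔ e ∈ c) ∧
      (∀ u : G.V, ∃ (es : List G.E) (w : G.V),
        G.IsPathFromTo u es w ∧ ∃ e ∈ c, G.src e = w) ∧
      (∃ e ∈ c, G.src e = v) ∧
      ∀ i, i < m →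
        {es | G.IsPathTo es v ∧ ¬ G.Contains c es ∧ es.length % m = i}.ncard = l i := by
  have : NeZero m := ⟨hm.ne'⟩
  refine ⟨Comet.quiver m l, Comet.cycle m l, .inl 0, inferInstanceAs (Finite (Comet.Vertex m l)),
    inferInstanceAs (Finite (Comet.Vertex m l)), Comet.isCycle_cycle, List.length_iterate .., ?_,
    fun u => ⟨[u], _, (Quiv.ofFun_isPathFromTo_iff _).mpr ⟨rfl, rfl⟩, _,
      Comet.step_mem_cycle u, rfl⟩,
    ⟨.inl 0, ?_, rfl⟩, fun i hi => Comet.ncard_setOf_isPathTo_base hi (hl i hi)⟩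
  · intro c' hc' e
    rw [Comet.mem_iff_of_isCycle hc', Comet.mem_iff_of_isCycle Comet.isCycle_cycle]
  · exact (Comet.mem_iff_of_isCycle Comet.isCycle_cycle _).mpr ⟨0, rfl⟩
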